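/- Let ν be a Lipschitz game that is Burkill–Cesari integrable (ν∈Q=BC∩AC_∞), and let λ∈NA be a measure with λ−ν monotone. Then λ−∂⁺_∅(ν) is a nonnegative measure, i.e. ∂⁺_∅(ν,E)≤λ(E) for every E∈Σ. Consequently ν_* ≤ ∂⁺_∅(ν) ≤ ν^* setwise, where ν^*=g.l.b.{λ∈NA: ν⪯λ} and ν_*=l.u.b.{λ∈NA: λ⪯ν}; that is, the Burkill–Cesari integral is a Milnor operator on Q. -/

import Mathlib

open MeasureTheory Set

def Nonatomic {Ω : Type*} [MeasurableSpace Ω] (P : Measure Ω) : Prop :=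
  ∀ A : Set Ω, MeasurableSet A → 0 < P A →
    ∃ B : Set Ω, MeasurableSet B ∧ B ⊆ A ∧ 0 < P B ∧ P B < P A

def IsPartition {Ω : Type*} [MeasurableSpace Ω] (D : Finset (Set Ω)) (E : Set Ω) : Prop :=
  (∀ I ∈ D, MeasurableSet I) ∧ ((D : Set (Set Ω)).PairwiseDisjoint id) ∧
    ⋃₀ (D : Set (Set Ω)) = E

def DominatedBy {Ω : Type*} [MeasurableSpace Ω] (ν : Set Ω → ℝ) (μ : Measure Ω) : Prop :=
  (∀ A B : Set Ω, MeasurableSet A → MeasurableSet B → A ⊆ B →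
      (μ A).toReal - ν A ≤ (μ B).toReal - ν B) ∧
  (∀ A B : Set Ω, MeasurableSet A → MeasurableSet B → A ⊆ B →
      (μ A).toReal + ν A ≤ (μ B).toReal + ν B)

/-! If `m - ν` is monotone, comparing each piece `I` of a partition with `∅` gives `ν I ≤ m I`,
so every partition sum of `ν` over `E` is at most `m E`, and so is their limit `L E`. Arbitrarily
fine partitions exist because `μ` is atomless: in a compatible Polish topology `μ` is tight and
outer regular, so a compact set of almost full measure is covered by finitely many open sets of
small measure. The lower bound is the upper bound applied to `-ν`. -/

open scoped ENNReal

lemma Nonatomic.nullSingletonClass {Ω : Type*} [MeasurableSpace Ω] [MeasurableSingletonClass Ω]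
    {μ : Measure Ω} (hμ : Nonatomic μ) : NullSingletonClass μ := by
  refine ⟨fun x => ?_⟩
  by_contra hx
  obtain ⟨B, -, hBx, hB0, hBlt⟩ := hμ {x} (measurableSet_singleton x) (pos_iff_ne_zero.2 hx)
  rcases subset_singleton_iff_eq.1 hBx with rfl | rfl
  · simp at hB0
  · exact hBlt.false

lemma exists_finset_cover_measure_lt {X : Type*} [TopologicalSpace X] [PolishSpace X]
    [MeasurableSpace X] [BorelSpace X] (μ : Measure X) [IsFiniteMeasure μ] [NullSingletonClass μ]
    {d : ℝ≥0∞} (hd : 0 < d) :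
    ∃ s : Finset (Set X), (∀ B ∈ s, MeasurableSet B ∧ μ B < d) ∧ ⋃₀ (s : Set (Set X)) = univ := by
  classical
  obtain ⟨K, hKc, hK⟩ := exists_isCompact_closure_measure_compl_lt μ d hd
  have hsmall : ∀ x : X, ∃ U, IsOpen U ∧ x ∈ U ∧ μ U < d := fun x => by
    obtain ⟨U, hxU, hUo, hU⟩ :=
      ({x} : Set X).exists_isOpen_lt_of_lt d (by rwa [measure_singleton (μ := μ)])
    exact ⟨U, hUo, hxU rfl, hU⟩
  choose U hUo hxU hUd using hsmall
  obtain ⟨t, ht⟩ := hKc.elim_finite_subcover U hUo (fun x _ => mem_iUnion.2 ⟨x, hxU x⟩)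
  refine ⟨insert (closure K)ᶜ (t.image U), ?_, ?_⟩
  · simp only [Finset.forall_mem_insert, Finset.forall_mem_image]
    exact ⟨⟨isClosed_closure.measurableSet.compl,
      (measure_mono (compl_subset_compl.2 subset_closure)).trans_lt hK⟩,
      fun x _ => ⟨(hUo x).measurableSet, hUd x⟩⟩
  · rw [Finset.coe_insert, sUnion_insert, Finset.coe_image, sUnion_image]
    exact eq_univ_of_univ_subset ((compl_union_self _).symm.subset.trans
      (union_subset_union_right _ ht))

lemma exists_isPartition_subordinate {Ω : Type*} [MeasurableSpace Ω] (s : Finset (Set Ω))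
    (hs : ∀ B ∈ s, MeasurableSet B) {E : Set Ω} (hE : MeasurableSet E)
    (hEs : E ⊆ ⋃₀ (s : Set (Set Ω))) :
    ∃ D : Finset (Set Ω), IsPartition D E ∧ ∀ I ∈ D, ∃ B ∈ s, I ⊆ B := by
  classical
  induction s using Finset.induction_on generalizing E with
  | empty =>
    refine ⟨∅, ⟨by simp, by simp, ?_⟩, by simp⟩
    simpa [eq_comm] using hEs
  | insert B s _ ih =>
    have hB := hs B (Finset.mem_insert_self B s)
    obtain ⟨D, ⟨hDm, hDd, hDE⟩, hDs⟩ :=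
      ih (fun C hC => hs C (Finset.mem_insert_of_mem hC)) (hE.diff hB) (by
        intro x ⟨hxE, hxB⟩
        simpa [hxB] using hEs hxE)
    refine ⟨insert (E ∩ B) D, ⟨?_, ?_, ?_⟩, ?_⟩
    · simpa only [Finset.forall_mem_insert] using ⟨hE.inter hB, hDm⟩
    · rw [Finset.coe_insert]
      refine hDd.insert fun I hI _ => ?_
      have hIB : I ⊆ E \ B := hDE ▸ subset_sUnion_of_mem hI
      exact disjoint_sdiff_right.mono inter_subset_right hIB
    · rw [Finset.coe_insert, sUnion_insert, hDE, inter_union_sdiff]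
    · simp only [Finset.forall_mem_insert, Finset.exists_mem_insert]
      exact ⟨Or.inl inter_subset_right, fun I hI => Or.inr (hDs I hI)⟩

lemma exists_isPartition_measure_lt {Ω : Type*} [MeasurableSpace Ω] [StandardBorelSpace Ω]
    (μ : Measure Ω) [IsFiniteMeasure μ] (hμ : Nonatomic μ) {E : Set Ω} (hE : MeasurableSet E)
    {δ : ℝ} (hδ : 0 < δ) :
    ∃ D : Finset (Set Ω), IsPartition D E ∧ ∀ I ∈ D, (μ I).toReal < δ := by
  obtain ⟨_, _, _⟩ := StandardBorelSpace.polish (α := Ω)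
  have := hμ.nullSingletonClass
  obtain ⟨s, hs, hsU⟩ := exists_finset_cover_measure_lt μ (ENNReal.ofReal_pos.2 hδ)
  obtain ⟨D, hD, hDs⟩ := exists_isPartition_subordinate s (fun B hB => (hs B hB).1) hE
    (hsU ▸ subset_univ E)
  refine ⟨D, hD, fun I hI => ?_⟩
  obtain ⟨B, hB, hIB⟩ := hDs I hI
  exact ENNReal.toReal_lt_of_lt_ofReal ((measure_mono hIB).trans_lt (hs B hB).2)

lemma IsPartition.signedMeasure_eq_sum {Ω : Type*} [MeasurableSpace Ω] {D : Finset (Set Ω)}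
    {E : Set Ω} (hD : IsPartition D E) (m : SignedMeasure Ω) : m E = ∑ I ∈ D, m I := by
  rw [← hD.2.2, sUnion_eq_biUnion]
  exact m.of_biUnion_finset hD.2.1 hD.1

lemma le_of_forall_isPartition_sum_le {Ω : Type*} [MeasurableSpace Ω] [StandardBorelSpace Ω]
    (μ : Measure Ω) [IsFiniteMeasure μ] (hμ : Nonatomic μ) (ν : Set Ω → ℝ) {E : Set Ω}
    (hE : MeasurableSet E) {l : ℝ}
    (hl : ∀ ε > 0, ∃ δ > 0, ∀ D : Finset (Set Ω), IsPartition D E →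
      (∀ I ∈ D, (μ I).toReal < δ) → |(∑ I ∈ D, ν I) - l| < ε)
    {c : ℝ} (hc : ∀ D : Finset (Set Ω), IsPartition D E → ∑ I ∈ D, ν I ≤ c) : l ≤ c := by
  refine le_of_forall_pos_le_add fun ε hε => ?_
  obtain ⟨δ, hδ, hδl⟩ := hl ε hε
  obtain ⟨D, hD, hDδ⟩ := exists_isPartition_measure_lt μ hμ hE hδ
  linarith [(abs_lt.1 (hδl D hD hDδ)).1, hc D hD]

lemma le_signedMeasure_of_monotone_sub {Ω : Type*} [MeasurableSpace Ω] [StandardBorelSpace Ω]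
    (μ : Measure Ω) [IsFiniteMeasure μ] (hμ : Nonatomic μ)
    (ν : Set Ω → ℝ) (hν0 : ν ∅ = 0) (L : Set Ω → ℝ)
    (hBC : ∀ E : Set Ω, MeasurableSet E → ∀ ε > 0, ∃ δ > 0,
      ∀ D : Finset (Set Ω), IsPartition D E → (∀ I ∈ D, (μ I).toReal < δ) →
        |(∑ I ∈ D, ν I) - L E| < ε)
    (m : SignedMeasure Ω)
    (hm : ∀ A B : Set Ω, MeasurableSet A → MeasurableSet B → A ⊆ B → m A - ν A ≤ m B - ν B)
    {E : Set Ω} (hE : MeasurableSet E) : L E ≤ m E := by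
  refine le_of_forall_isPartition_sum_le μ hμ ν hE (hBC E hE) fun D hD => ?_
  have hνm : ∀ I ∈ D, ν I ≤ m I := fun I hI => by
    have := hm ∅ I MeasurableSet.empty (hD.1 I hI) (empty_subset I)
    rw [hν0, m.empty] at this
    linarith
  exact (Finset.sum_le_sum hνm).trans_eq (hD.signedMeasure_eq_sum m).symm

theorem stmt16_general {Ω : Type*} [MeasurableSpace Ω] [StandardBorelSpace Ω]
    (μ : Measure Ω) [IsFiniteMeasure μ] (hμ : Nonatomic μ)
    (ν : Set Ω → ℝ) (hν0 : ν ∅ = 0)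
    (L : Set Ω → ℝ)
    (hBC : ∀ E : Set Ω, MeasurableSet E → ∀ ε > 0, ∃ δ > 0,
      ∀ D : Finset (Set Ω), IsPartition D E → (∀ I ∈ D, (μ I).toReal < δ) →
        |(∑ I ∈ D, ν I) - L E| < ε) :
    (∀ m : SignedMeasure Ω,
      (∀ A B : Set Ω, MeasurableSet A → MeasurableSet B → A ⊆ B →
        m A - ν A ≤ m B - ν B) →
      ∀ E : Set Ω, MeasurableSet E → L E ≤ m E) ∧
    (∀ m : SignedMeasure Ω,
      (∀ A B : Set Ω, MeasurableSet A → MeasurableSet B → A ⊆ B →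
        ν A - m A ≤ ν B - m B) →
      ∀ E : Set Ω, MeasurableSet E → m E ≤ L E) := by
  refine ⟨fun m hm E hE => le_signedMeasure_of_monotone_sub μ hμ ν hν0 L hBC m hm hE,
    fun m hm E hE => ?_⟩
  have hBC_neg : ∀ E : Set Ω, MeasurableSet E → ∀ ε > 0, ∃ δ > 0,
      ∀ D : Finset (Set Ω), IsPartition D E → (∀ I ∈ D, (μ I).toReal < δ) →
        |(∑ I ∈ D, -ν I) - -L E| < ε := by
    simpa only [Finset.sum_neg_distrib, ← neg_sub', abs_neg] using hBC
  have hm_neg : ∀ A B : Set Ω, MeasurableSet A → MeasurableSet B → A ⊆ B →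
      (-m) A - (-ν) A ≤ (-m) B - (-ν) B := fun A B hA hB hAB => by
    simpa only [neg_apply, Pi.neg_apply, neg_sub_neg] using hm A B hA hB hAB
  simpa only [neg_apply, Pi.neg_apply, neg_le_neg_iff] using
    le_signedMeasure_of_monotone_sub μ hμ (-ν) (by simp [hν0]) (-L) hBC_neg (-m) hm_neg hE

/-- For `ν ∈ Q = BC ∩ AC_∞` with Burkill–Cesari integral `L`: if `m ∈ NA` and
`m - ν` is monotone then `L ≤ m` setwise; dually, if `ν - m'` is monotone then
`m' ≤ L` setwise.  Hence `ν_* ≤ ∂⁺_∅(ν) ≤ ν^*`: the Burkill–Cesari integral is a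
Milnor operator on `Q`. -/
theorem stmt16 {Ω : Type*} [MeasurableSpace Ω] [StandardBorelSpace Ω]
    (μ : Measure Ω) [IsFiniteMeasure μ] (hμ : Nonatomic μ)
    (ν : Set Ω → ℝ) (hν0 : ν ∅ = 0)
    (hACinf : ∃ μ' : Measure Ω, IsFiniteMeasure μ' ∧ Nonatomic μ' ∧ DominatedBy ν μ')
    (L : Set Ω → ℝ)
    (hBC : ∀ E : Set Ω, MeasurableSet E → ∀ ε > 0, ∃ δ > 0,
      ∀ D : Finset (Set Ω), IsPartition D E → (∀ I ∈ D, (μ I).toReal < δ) →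
        |(∑ I ∈ D, ν I) - L E| < ε) :
    (∀ m : SignedMeasure Ω,
      (∀ A B : Set Ω, MeasurableSet A → MeasurableSet B → A ⊆ B →
        m A - ν A ≤ m B - ν B) →
      ∀ E : Set Ω, MeasurableSet E → L E ≤ m E) ∧
    (∀ m : SignedMeasure Ω,
      (∀ A B : Set Ω, MeasurableSet A → MeasurableSet B → A ⊆ B →
        ν A - m A ≤ ν B - m B) →
      ∀ E : Set Ω, MeasurableSet E → m E ≤ L E) :=
  stmt16_general μ hμ ν hν0 L hBC
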